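/- arXiv:1206.1743 — 7 statements merged into one kernel-verified Lean document; each statement's English description precedes it below -/
import Mathlib

section
/- Let γ ∈ ℝ with 0 ≤ γ ≤ 1, β = (1-γ)/2, and θ ∈ ℝ. Then the complex number g_{1A} = (γ + β e^{iθ})/(1 - β e^{-iθ}) satisfies |g_{1A}| ≤ 1. In particular the Saul'yev scheme with amplification factor g_{1A} is unconditionally stable. -/
/-!
With `z = e^{iθ}` we have `γ = 1 - 2β` and `e^{-iθ} = conj z`, so the denominator has the same
modulus as `1 - β z`. For `‖z‖ = 1`,
`‖(1 - 2β) + β z‖² - ‖1 - β z‖² = -4 β (1 - β) (1 - Re z) ≤ 0` whenever `0 ≤ β ≤ 1`.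
-/

open Complex ComplexConjugate

lemma normSq_ofReal_add_ofReal_mul {z : ℂ} (hz : ‖z‖ = 1) (a b : ℝ) :
    normSq (a + b * z) = a ^ 2 + 2 * a * b * z.re + b ^ 2 := by
  have hz2 : z.re * z.re + z.im * z.im = 1 := by
    rw [← normSq_apply, ← Complex.sq_norm, hz, one_pow]
  simp only [normSq_apply, add_re, add_im, mul_re, mul_im, ofReal_re, ofReal_im]
  linear_combination b ^ 2 * hz2

lemma norm_one_sub_two_mul_add_mul_le {z : ℂ} (hz : ‖z‖ = 1) {β : ℝ} (hβ0 : 0 ≤ β)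
    (hβ1 : β ≤ 1) : ‖1 - 2 * (β : ℂ) + β * z‖ ≤ ‖1 - β * z‖ := by
  rw [← sq_le_sq₀ (norm_nonneg _) (norm_nonneg _), Complex.sq_norm, Complex.sq_norm]
  have hnum := normSq_ofReal_add_ofReal_mul hz (1 - 2 * β) β
  have hden := normSq_ofReal_add_ofReal_mul hz 1 (-β)
  push_cast at hnum hden
  rw [neg_mul, ← sub_eq_add_neg] at hden
  rw [hnum, hden]
  have hre : z.re ≤ 1 := hz ▸ re_le_norm z
  nlinarith [mul_nonneg (mul_nonneg hβ0 (sub_nonneg.2 hβ1)) (sub_nonneg.2 hre)]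

theorem stmt_1 (γ β : ℝ) (hγ : 0 ≤ γ) (hγ1 : γ ≤ 1) (hβ : β = (1 - γ) / 2) (θ : ℝ) :
    ‖(γ + β * Complex.exp (Complex.I * θ)) /
      (1 - β * Complex.exp (-Complex.I * θ))‖ ≤ 1 := by
  set z := Complex.exp (Complex.I * θ)
  have hz : ‖z‖ = 1 := by
    rw [show z = exp (θ * I) by rw [mul_comm]]
    exact norm_exp_ofReal_mul_I θ
  have hconj : Complex.exp (-Complex.I * θ) = conj z := by
    rw [← exp_conj]; simp
  have hden : ‖1 - β * conj z‖ = ‖1 - β * z‖ := by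
    rw [← norm_conj]; simp
  have hγβ : (γ : ℂ) = 1 - 2 * β := by rw [hβ]; push_cast; ring
  rw [norm_div, hconj, hden, hγβ]
  exact div_le_one_of_le₀ (norm_one_sub_two_mul_add_mul_le hz (by linarith) (by linarith))
    (norm_nonneg _)
end

section
/- Let γ̃ ∈ [0,1], α̃ = (1+γ̃)/2, β̃ = (1-γ̃)/2, θ ∈ ℝ. Then (γ̃² + β̃² + 2β̃γ̃ cos θ)/(1 + β̃² - 2β̃ cos θ) = (1 - (4β̃γ̃/α̃²) sin²(θ/2))/(1 + (4β̃/α̃²) sin²(θ/2)), and this quantity g₂ satisfies |g₂| ≤ 1 for all θ (assuming γ̃ > 0 so α̃ > 0). -/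
/-! Writing `s = sin² (θ/2)`, so that `cos θ = 1 - 2 s`, the numerator and denominator of `g₂`
become `α̃² - γ̃ · 4β̃s` and `α̃² + 4β̃s`; dividing both by `α̃²` gives the first form. Since
`4β̃s ≥ 0` and `|γ̃| ≤ 1`, the numerator is bounded in absolute value by the (positive)
denominator. -/

open Real

lemma cos_eq_one_sub_two_mul_sin_half_sq (θ : ℝ) : cos θ = 1 - 2 * sin (θ / 2) ^ 2 := by
  rw [← cos_two_mul_eq_one_sub, mul_div_cancel₀ θ two_ne_zero]

lemma abs_sub_mul_div_add_le_one {a x γ : ℝ} (ha : 0 < a) (hx : 0 ≤ x) (hγ : |γ| ≤ 1) :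
    |(a - γ * x) / (a + x)| ≤ 1 := by
  have hden : 0 < a + x := by positivity
  rw [abs_div, abs_of_pos hden, div_le_one hden]
  calc |a - γ * x| ≤ |a| + |γ| * |x| := by rw [← abs_mul]; exact abs_sub _ _
    _ ≤ a + 1 * x := by
        rw [abs_of_pos ha, abs_of_nonneg hx]
        gcongr
    _ = a + x := by ring

theorem stmt_2 (γ α β : ℝ) (hγ0 : 0 < γ) (hγ1 : γ ≤ 1)
    (hα : α = (1 + γ) / 2) (hβ : β = (1 - γ) / 2) (θ : ℝ) :
    (γ ^ 2 + β ^ 2 + 2 * β * γ * Real.cos θ) / (1 + β ^ 2 - 2 * β * Real.cos θ)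
      = (1 - (4 * β * γ / α ^ 2) * Real.sin (θ / 2) ^ 2) /
        (1 + (4 * β / α ^ 2) * Real.sin (θ / 2) ^ 2) ∧
    |(γ ^ 2 + β ^ 2 + 2 * β * γ * Real.cos θ) / (1 + β ^ 2 - 2 * β * Real.cos θ)| ≤ 1 := by
  set s := sin (θ / 2) ^ 2
  have hcos : cos θ = 1 - 2 * s := cos_eq_one_sub_two_mul_sin_half_sq θ
  have hnum : γ ^ 2 + β ^ 2 + 2 * β * γ * cos θ = α ^ 2 - γ * (4 * β * s) := by
    rw [hcos, hα, hβ]; ring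
  have hden : 1 + β ^ 2 - 2 * β * cos θ = α ^ 2 + 4 * β * s := by
    rw [hcos, hα, hβ]; ring
  have hα0 : α ≠ 0 := by rw [hα]; positivity
  rw [hnum, hden]
  constructor
  · field_simp
  · refine abs_sub_mul_div_add_le_one (by positivity) ?_ (abs_le.mpr ⟨by linarith, hγ1⟩)
    have : 0 ≤ β := by rw [hβ]; linarith
    positivity
end

section
/- Define g₂(r, θ) = (1 - (4β̃(r)γ̃(r)/α̃(r)²) sin²(θ/2))/(1 + (4β̃(r)/α̃(r)²) sin²(θ/2)) where γ̃ : ℝ → ℝ satisfies γ̃(-r)·γ̃(r) = 1 and γ̃(r) ≠ -1, with α̃(r) = (1+γ̃(r))/2, β̃(r) = (1-γ̃(r))/2. Then g₂(-r, θ) · g₂(r, θ) = 1 for all θ where both denominators are nonzero. -/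
/-! With `c = γ̃(r)`, the coefficient `k = 4β̃/α̃²` is `diffusionWeight c`, and the substitution
`c ↦ c⁻¹` turns it into `-c k`. Hence the numerator `1 - c k s` of `g₂(r)` is the denominator
`1 + k(-r) s` of `g₂(-r)` and vice versa, so the two factors are reciprocal. -/

def diffusionWeight {K : Type*} [Field K] (c : K) : K :=
  4 * ((1 - c) / 2) / ((1 + c) / 2) ^ 2

theorem diffusionWeight_inv {K : Type*} [Field K] {c : K} (hc : c ≠ 0) :
    diffusionWeight c⁻¹ = -c * diffusionWeight c := by
  rw [diffusionWeight, diffusionWeight, show 1 - c⁻¹ = -(1 - c) * c⁻¹ by field_simp; ring,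
    show 1 + c⁻¹ = (1 + c) * c⁻¹ by field_simp; ring]
  field_simp

theorem stmt_3_general (γ : ℝ → ℝ) (r θ : ℝ)
    (hγ : γ (-r) * γ r = 1)
    (α β : ℝ → ℝ)
    (hα : ∀ x, α x = (1 + γ x) / 2) (hβ : ∀ x, β x = (1 - γ x) / 2)
    (g : ℝ → ℝ → ℝ)
    (hg : ∀ x t, g x t = (1 - (4 * β x * γ x / (α x) ^ 2) * Real.sin (t / 2) ^ 2) /
        (1 + (4 * β x / (α x) ^ 2) * Real.sin (t / 2) ^ 2))
    (hden1 : 1 + (4 * β r / (α r) ^ 2) * Real.sin (θ / 2) ^ 2 ≠ 0)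
    (hden2 : 1 + (4 * β (-r) / (α (-r)) ^ 2) * Real.sin (θ / 2) ^ 2 ≠ 0) :
    g (-r) θ * g r θ = 1 := by
  have hc : γ r ≠ 0 := right_ne_zero_of_mul_eq_one hγ
  have hγ_neg : γ (-r) = (γ r)⁻¹ := eq_inv_of_mul_eq_one_left hγ
  have hk : 4 * β (-r) / α (-r) ^ 2 = -γ r * (4 * β r / α r ^ 2) := by
    rw [hα, hβ, hα, hβ, hγ_neg]
    exact diffusionWeight_inv hc
  have numer_neg_eq_denom : 1 - 4 * β (-r) * γ (-r) / α (-r) ^ 2 * Real.sin (θ / 2) ^ 2 =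
      1 + 4 * β r / α r ^ 2 * Real.sin (θ / 2) ^ 2 := by
    rw [mul_div_right_comm, hk, hγ_neg]
    field_simp
    ring
  have numer_eq_denom_neg : 1 - 4 * β r * γ r / α r ^ 2 * Real.sin (θ / 2) ^ 2 =
      1 + 4 * β (-r) / α (-r) ^ 2 * Real.sin (θ / 2) ^ 2 := by
    rw [hk]
    ring
  rw [hg, hg, numer_neg_eq_denom, numer_eq_denom_neg, div_mul_div_cancel₀ hden2, div_self hden1]

theorem stmt_3 (γ : ℝ → ℝ) (r θ : ℝ)
    (hγ : γ (-r) * γ r = 1)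
    (hγ1 : γ r ≠ -1) (hγ2 : γ (-r) ≠ -1)
    (α β : ℝ → ℝ)
    (hα : ∀ x, α x = (1 + γ x) / 2) (hβ : ∀ x, β x = (1 - γ x) / 2)
    (g : ℝ → ℝ → ℝ)
    (hg : ∀ x t, g x t = (1 - (4 * β x * γ x / (α x) ^ 2) * Real.sin (t / 2) ^ 2) /
        (1 + (4 * β x / (α x) ^ 2) * Real.sin (t / 2) ^ 2))
    (hden1 : 1 + (4 * β r / (α r) ^ 2) * Real.sin (θ / 2) ^ 2 ≠ 0)
    (hden2 : 1 + (4 * β (-r) / (α (-r)) ^ 2) * Real.sin (θ / 2) ^ 2 ≠ 0) :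
    g (-r) θ * g r θ = 1 :=
  stmt_3_general γ r θ hγ α β hα hβ g hg hden1 hden2
end

section
/- With γ̃ = (1 - r/2)/(1 + r/2), β̃ = (1-γ̃)/2, α̃ = (1+γ̃)/2 and r > 0, the second-order amplification factor equals g₂ = (1 - 2r(1 - r/2) sin²(θ/2))/(1 + 2r(1 + r/2) sin²(θ/2)), and its exponent h₂(θ) = -log g₂ has Taylor expansion in θ beginning h₂ = r θ² - (r/12 + r³/4) θ⁴ + O(θ⁶). In particular h₂ agrees with the exact exponent h_ex = 4r sin²(θ/2) = rθ² - (r/12)θ⁴ + ... through order θ³. -/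
/-! Write `s = sin² (θ / 2)`. The coefficients simplify to `g₂ = (1 - a s) / (1 + b s)` with
`a = 2r - r²` and `b = 2r + r²`, so `log (1 + x) = x - x² / 2 + O(x³)` applied to numerator and
denominator gives `-log g₂ = (a + b) s - (b² - a²) s² / 2 + O(s³) = 4r s - 4r³ s² + O(θ⁶)`.
Since `s = (1 - cos θ) / 2`, the order-six Taylor bound for `cos` gives
`s = θ² / 4 - θ⁴ / 48 + O(θ⁶)` and `s² = θ⁴ / 16 + O(θ⁶)`. -/

open Asymptotics Filter Finset Topology

theorem Complex.isBigO_exp_sub_sum_range {n : ℕ} (hn : 0 < n) :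
    (fun z : ℂ => exp z - ∑ m ∈ range n, z ^ m / m.factorial) =O[𝓝 0] (· ^ n) := by
  refine IsBigO.of_bound ((n.succ : ℝ) * (n.factorial * n : ℝ)⁻¹) ?_
  filter_upwards [Metric.closedBall_mem_nhds (0 : ℂ) one_pos] with z hz
  rw [norm_pow, mul_comm]
  exact exp_bound (by simpa using hz) hn

theorem Complex.isBigO_cos_sub_taylor :
    (fun z : ℂ => cos z - (1 - z ^ 2 / 2 + z ^ 4 / 24)) =O[𝓝 0] (· ^ 6) := by
  set R : ℂ → ℂ := fun z => exp z - ∑ m ∈ range 6, z ^ m / m.factorial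
  have hR (c : ℂ) (hc : ‖c‖ = 1) : (fun z => R (z * c)) =O[𝓝 0] (· ^ 6) := by
    have hmul : Tendsto (· * c) (𝓝 0) (𝓝 0) := by
      simpa using (continuous_mul_const c).tendsto 0
    refine ((isBigO_exp_sub_sum_range (by norm_num)).comp_tendsto hmul).trans ?_
    exact isBigO_of_le _ fun z => by simp [mul_pow, hc]
  refine ((hR I (by simp)).add (hR (-I) (by simp))).const_mul_left (1 / 2) |>.congr_left
    fun z => ?_
  simp only [R, cos, neg_mul, mul_neg, sum_range_succ, sum_range_zero, Nat.factorial]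
  push_cast
  linear_combination (-(z ^ 2) / 2 + z ^ 4 * (1 - I ^ 2) / 24) * I_sq

theorem Real.isBigO_cos_sub_taylor :
    (fun θ : ℝ => cos θ - (1 - θ ^ 2 / 2 + θ ^ 4 / 24)) =O[𝓝 0] (· ^ 6) := by
  have h := Complex.isBigO_cos_sub_taylor.comp_tendsto
    (Complex.continuous_ofReal.tendsto' 0 0 Complex.ofReal_zero)
  rw [← Complex.isBigO_ofReal_left, ← Complex.isBigO_ofReal_right]
  exact h.congr' (Eventually.of_forall fun θ => by simp) (Eventually.of_forall fun θ => by simp)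

theorem Real.isBigO_log_one_add_sub :
    (fun x : ℝ => log (1 + x) - (x - x ^ 2 / 2)) =O[𝓝 0] (· ^ 3) := by
  refine IsBigO.of_bound 2 ?_
  filter_upwards [Metric.ball_mem_nhds (0 : ℝ) (by norm_num : (0 : ℝ) < 1 / 2)] with x hx
  rw [Metric.mem_ball, dist_zero_right, norm_eq_abs] at hx
  have h := abs_log_sub_add_sum_range_le (x := -x) (by rw [abs_neg]; linarith) 2
  norm_num [sum_range_succ] at h
  calc ‖log (1 + x) - (x - x ^ 2 / 2)‖ = |-x + x ^ 2 / 2 + log (1 + x)| := by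
        rw [norm_eq_abs]; ring_nf
    _ ≤ |x| ^ 3 / (1 - |x|) := h
    _ ≤ 2 * ‖x ^ 3‖ := by
        rw [norm_pow, norm_eq_abs, div_le_iff₀ (by linarith)]
        nlinarith [pow_nonneg (abs_nonneg x) 3]

open Real

theorem isBigO_log_one_add_mul_sub (c : ℝ) :
    (fun x : ℝ => log (1 + c * x) - (c * x - c ^ 2 * x ^ 2 / 2)) =O[𝓝 0] (· ^ 3) := by
  have hc : Tendsto (c * ·) (𝓝 0) (𝓝 0) := by simpa using (continuous_const_mul c).tendsto 0
  refine (isBigO_log_one_add_sub.comp_tendsto hc).trans ?_ |>.congr_left fun x => by simp; ring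
  exact ((isBigO_refl _ _).const_mul_left (c ^ 3)).congr_left fun x => by simp [mul_pow]

theorem isBigO_neg_log_div_sub (a b : ℝ) :
    (fun x : ℝ => -log ((1 - a * x) / (1 + b * x)) - ((a + b) * x - (b ^ 2 - a ^ 2) / 2 * x ^ 2))
      =O[𝓝 0] (· ^ 3) := by
  have hne (c : ℝ) : ∀ᶠ x : ℝ in 𝓝 0, 1 + c * x ≠ 0 :=
    (continuous_const.add (continuous_const_mul c)).continuousAt.eventually_ne (by simp)
  refine ((isBigO_log_one_add_mul_sub b).sub (isBigO_log_one_add_mul_sub (-a))).congr'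
    ?_ EventuallyEq.rfl
  filter_upwards [hne b, hne (-a)] with x hb ha
  rw [neg_mul, ← sub_eq_add_neg] at ha
  simp only [log_div ha hb]
  ring_nf

theorem isBigO_sin_half_sq_sub :
    (fun θ : ℝ => sin (θ / 2) ^ 2 - (θ ^ 2 / 4 - θ ^ 4 / 48)) =O[𝓝 0] (· ^ 6) :=
  (isBigO_cos_sub_taylor.const_mul_left (-1 / 2)).congr_left fun θ => by
    rw [sin_sq_eq_half_sub, mul_div_cancel₀ θ two_ne_zero]; ring

theorem isBigO_sin_half_sq_pow (n : ℕ) :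
    (fun θ : ℝ => (sin (θ / 2) ^ 2) ^ n) =O[𝓝 0] (· ^ (2 * n)) := by
  have h : (fun θ : ℝ => sin (θ / 2) ^ 2) =O[𝓝 0] (· ^ 2) :=
    IsBigO.of_bound (1 / 4) <| Eventually.of_forall fun θ => by
      rw [norm_pow, norm_pow, norm_eq_abs, norm_eq_abs, sq_abs, sq_abs]
      linarith [sin_sq_le_sq (x := θ / 2)]
  exact (h.pow n).congr_right fun θ => (pow_mul θ 2 n).symm

theorem isBigO_sin_half_sq_sq_sub :
    (fun θ : ℝ => (sin (θ / 2) ^ 2) ^ 2 - θ ^ 4 / 16) =O[𝓝 0] (· ^ 6) := by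
  have hsub : (fun θ : ℝ => sin (θ / 2) ^ 2 - θ ^ 2 / 4) =O[𝓝 0] (· ^ 4) :=
    ((isBigO_sin_half_sq_sub.trans (isLittleO_pow_pow (by norm_num)).isBigO).sub
      ((isBigO_refl _ _).const_mul_left (1 / 48))).congr_left fun θ => by ring
  have hadd : (fun θ : ℝ => sin (θ / 2) ^ 2 + θ ^ 2 / 4) =O[𝓝 0] (· ^ 2) :=
    ((isBigO_sin_half_sq_pow 1).add ((isBigO_refl _ _).const_mul_left (1 / 4))).congr_left
      fun θ => by ring
  exact (hsub.mul hadd).congr (fun θ => by ring) (fun θ => by ring)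

theorem isBigO_neg_log_div_sin_half_sq_sub (a b : ℝ) :
    (fun θ : ℝ => -log ((1 - a * sin (θ / 2) ^ 2) / (1 + b * sin (θ / 2) ^ 2))
      - ((a + b) * sin (θ / 2) ^ 2 - (b ^ 2 - a ^ 2) / 2 * (sin (θ / 2) ^ 2) ^ 2))
      =O[𝓝 0] (· ^ 6) := by
  have hs : Tendsto (fun θ : ℝ => sin (θ / 2) ^ 2) (𝓝 0) (𝓝 0) :=
    (by fun_prop : Continuous fun θ : ℝ => sin (θ / 2) ^ 2).tendsto' 0 0 (by simp)
  exact ((isBigO_neg_log_div_sub a b).comp_tendsto hs).trans (isBigO_sin_half_sq_pow 3)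

theorem stmt_5 (r : ℝ) (hr : 0 < r)
    (γ α β : ℝ) (hγ : γ = (1 - r / 2) / (1 + r / 2))
    (hα : α = (1 + γ) / 2) (hβ : β = (1 - γ) / 2)
    (g₂ : ℝ → ℝ)
    (hg₂ : ∀ θ, g₂ θ = (1 - (4 * β * γ / α ^ 2) * Real.sin (θ / 2) ^ 2) /
        (1 + (4 * β / α ^ 2) * Real.sin (θ / 2) ^ 2)) :
    (∀ θ : ℝ, g₂ θ = (1 - 2 * r * (1 - r / 2) * Real.sin (θ / 2) ^ 2) /
        (1 + 2 * r * (1 + r / 2) * Real.sin (θ / 2) ^ 2)) ∧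
    (fun θ : ℝ => -Real.log (g₂ θ) - (r * θ ^ 2 - (r / 12 + r ^ 3 / 4) * θ ^ 4))
      =O[nhds 0] (fun θ : ℝ => θ ^ 6) ∧
    (fun θ : ℝ => -Real.log (g₂ θ) - 4 * r * Real.sin (θ / 2) ^ 2)
      =O[nhds 0] (fun θ : ℝ => θ ^ 4) := by
  have hr' : 1 + r / 2 ≠ 0 := by positivity
  have ha : 4 * β * γ / α ^ 2 = 2 * r * (1 - r / 2) := by
    rw [hβ, hα, hγ]; field_simp; ring
  have hb : 4 * β / α ^ 2 = 2 * r * (1 + r / 2) := by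
    rw [hβ, hα, hγ]; field_simp; ring
  have hg : ∀ θ, g₂ θ = (1 - 2 * r * (1 - r / 2) * sin (θ / 2) ^ 2) /
      (1 + 2 * r * (1 + r / 2) * sin (θ / 2) ^ 2) := fun θ => by
    rw [hg₂, ha, hb]
  have hlog : (fun θ => -log (g₂ θ)
      - (4 * r * sin (θ / 2) ^ 2 - 4 * r ^ 3 * (sin (θ / 2) ^ 2) ^ 2)) =O[𝓝 0] (· ^ 6) :=
    (isBigO_neg_log_div_sin_half_sq_sub (2 * r * (1 - r / 2)) (2 * r * (1 + r / 2))).congr_left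
      fun θ => by rw [hg]; ring
  refine ⟨hg, ?_, ?_⟩
  · exact ((hlog.add (isBigO_sin_half_sq_sub.const_mul_left (4 * r))).sub
      (isBigO_sin_half_sq_sq_sub.const_mul_left (4 * r ^ 3))).congr_left fun θ => by ring
  · exact ((hlog.trans (isLittleO_pow_pow (by norm_num)).isBigO).sub
      ((isBigO_sin_half_sq_pow 2).const_mul_left (4 * r ^ 3))).congr_left fun θ => by ring
end

section
/- For η > 0, set s̃ = (2/η)(√(1 + η²/4) − 1). Then 0 < s̃ < 1, and 2s̃/(1 − s̃²) = η/2. Consequently the second-order amplification factor g₂ = (1 − i·2(s̃/c̃²) sin θ)/(1 + i·2(s̃/c̃²) sin θ) with c̃² = 1 − s̃² equals the Crank–Nicolson factor (1 − i(η/2) sin θ)/(1 + i(η/2) sin θ), and |g₂| = 1 for all θ. -/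
/-!
Clearing denominators, `2 s̃ / (1 - s̃²) = η / 2` says that `s̃` is a root of `η s² + 4 s - η = 0`, and
`s̃ = (2/η)(√(1 + η²/4) - 1)` is the root of this quadratic lying in `(0, 1)`. Once the coefficients
agree, `g₂` is the Crank–Nicolson factor `(1 - w) / (1 + w)` with `w` purely imaginary, and its
numerator is the complex conjugate of its denominator, so `|g₂| = 1`.
-/

open Complex

theorem Complex.norm_one_sub_div_one_add_eq_one {w : ℂ} (hw : w.re = 0) :
    ‖(1 - w) / (1 + w)‖ = 1 := by
  have hden : 1 + w ≠ 0 := fun h => by simpa [hw] using congrArg re h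
  have hconj : 1 - w = (starRingEnd ℂ) (1 + w) := by
    apply Complex.ext <;> simp [hw]
  rw [norm_div, hconj, norm_conj, div_self (norm_ne_zero_iff.mpr hden)]

section SymplecticCoefficient

variable {η : ℝ}

noncomputable def symplecticCoeff (η : ℝ) : ℝ := 2 / η * (√(1 + η ^ 2 / 4) - 1)

theorem symplecticCoeff_pos (hη : 0 < η) : 0 < symplecticCoeff η := by
  have : 1 < √(1 + η ^ 2 / 4) := by
    rw [Real.lt_sqrt zero_le_one]
    nlinarith [pow_pos hη 2]
  exact mul_pos (by positivity) (by linarith)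

theorem symplecticCoeff_lt_one (hη : 0 < η) : symplecticCoeff η < 1 := by
  have : √(1 + η ^ 2 / 4) < 1 + η / 2 := by
    rw [Real.sqrt_lt' (by positivity)]
    nlinarith
  rw [symplecticCoeff, div_mul_eq_mul_div, div_lt_one hη]
  linarith

theorem symplecticCoeff_isRoot (hη : η ≠ 0) :
    η * symplecticCoeff η ^ 2 + 4 * symplecticCoeff η = η := by
  have hr : √(1 + η ^ 2 / 4) ^ 2 = 1 + η ^ 2 / 4 := Real.sq_sqrt (by positivity)
  rw [symplecticCoeff]
  generalize √(1 + η ^ 2 / 4) = r at hr ⊢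
  field_simp
  linear_combination 4 * hr

theorem two_mul_div_one_sub_sq_of_isRoot {s : ℝ} (hs : s ≠ 0) (hroot : η * s ^ 2 + 4 * s = η) :
    2 * s / (1 - s ^ 2) = η / 2 := by
  have hkey : η * (1 - s ^ 2) = 4 * s := by linear_combination -hroot
  have hne : 1 - s ^ 2 ≠ 0 := fun h => by simp [h, hs] at hkey
  field_simp
  linear_combination hroot

end SymplecticCoefficient

theorem stmt_9 (η : ℝ) (hη : 0 < η)
    (s : ℝ) (hs : s = (2 / η) * (Real.sqrt (1 + η ^ 2 / 4) - 1)) :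
    (0 < s ∧ s < 1) ∧
    2 * s / (1 - s ^ 2) = η / 2 ∧
    (∀ θ : ℝ,
      (1 - Complex.I * (2 * (s / (1 - s ^ 2))) * Real.sin θ) /
        (1 + Complex.I * (2 * (s / (1 - s ^ 2))) * Real.sin θ)
      = (1 - Complex.I * (η / 2) * Real.sin θ) /
        (1 + Complex.I * (η / 2) * Real.sin θ) ∧
      ‖(1 - Complex.I * (2 * (s / (1 - s ^ 2))) * Real.sin θ) /
        (1 + Complex.I * (2 * (s / (1 - s ^ 2))) * Real.sin θ)‖ = 1) := by
  change s = symplecticCoeff η at hs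
  subst hs
  have hpos := symplecticCoeff_pos hη
  have hcoeff := two_mul_div_one_sub_sq_of_isRoot hpos.ne' (symplecticCoeff_isRoot hη.ne')
  refine ⟨⟨hpos, symplecticCoeff_lt_one hη⟩, hcoeff, fun θ => ?_⟩
  have hcoeffC : 2 * ((symplecticCoeff η : ℂ) / (1 - (symplecticCoeff η : ℂ) ^ 2)) = η / 2 := by
    rw [← mul_div_assoc]
    exact_mod_cast hcoeff
  rw [hcoeffC]
  exact ⟨rfl, Complex.norm_one_sub_div_one_add_eq_one (by simp)⟩
end

section
/- Let γ ∈ (0,1], β, λ ∈ ℝ with β + γ + λ = 1, and suppose |β| < 1. Define h_{1A}(θ) by g_{1A} = (γ + λe^{iθ})/(1 − βe^{-iθ}) = e^{-h_{1A}}. Then the first-order Taylor coefficients of h_{1A} at θ = 0 are: coefficient of iθ equals (2β − (1−γ))/(1−β), and the coefficient of θ² equals (1−γ)(β+γ)/(2(1−β)²). -/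
/-
With `c₁ = λ/(1-β)` and `c₂ = -β/(1-β)` the numerator and denominator of `g` are
`(1-β)(1 + c₁(e^{iθ} - 1))` and `(1-β)(1 + c₂(e^{-iθ} - 1))`, and near `θ = 0` the principal
logarithm of their quotient is the difference of their logarithms, whose expansions give the
coefficients `-(c₁ + c₂)` of `iθ` and `(c₁ - c₂)(1 - c₁ - c₂)/2` of `θ²`. Each logarithm is an instance
of `log (1 + c(e^z - 1)) = c z + c(1-c) z²/2 + O(z³)`, which follows from one differentiation:
the derivative of the remainder is `c(1-c)((e^z - 1 - z) - c z (e^z - 1)) / (1 + c(e^z - 1))`,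
which is `O(z²)`.
-/

open Asymptotics Filter

open Complex Topology

lemma isBigO_pow_succ_of_hasDerivAt {E : Type*} [NormedAddCommGroup E] [NormedSpace ℂ E]
    {f f' : ℂ → E} {n : ℕ} (hf : ∀ᶠ z in 𝓝 0, HasDerivAt f (f' z) z)
    (hf' : f' =O[𝓝 0] (· ^ n)) (hf0 : f 0 = 0) :
    f =O[𝓝 0] (· ^ (n + 1)) := by
  have hnorm_fderiv : (fun z => ‖fderiv ℝ f z‖) =ᶠ[𝓝 0] (fun z => ‖f' z‖) := by
    filter_upwards [hf] with z hz
    rw [(hz.hasFDerivAt.restrictScalars ℝ).fderiv]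
    simp
  have hfderiv : fderiv ℝ f =O[𝓝 0] (‖· - 0‖ ^ (n : ℝ)) := by
    refine isBigO_norm_left.mp ((hf'.norm_left.congr' hnorm_fderiv.symm .rfl).trans ?_)
    exact isBigO_of_le _ fun z => by simp
  refine (isBigO_norm_rpow_add_one_of_fderiv_of_apply_eq_zero n.cast_nonneg
    (hf.mono fun z hz => hz.differentiableAt.restrictScalars ℝ) hfderiv hf0).trans ?_
  exact isBigO_of_le _ fun z => by norm_cast; simp

lemma isBigO_pow_comp_mul_ofReal {f : ℂ → ℂ} {n : ℕ} (hf : f =O[𝓝 0] (· ^ n)) (w : ℂ) :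
    (fun θ : ℝ => f (w * θ)) =O[𝓝 0] (fun θ : ℝ => θ ^ n) := by
  have hw : Tendsto (fun θ : ℝ => w * θ) (𝓝 0) (𝓝 0) :=
    Continuous.tendsto' (by fun_prop) 0 0 (by simp)
  refine (hf.comp_tendsto hw).trans (isBigO_of_le' (c := ‖w‖ ^ n) _ fun θ => ?_)
  simp [mul_pow]

lemma eventually_log_div_eq_log_sub_log {α : Type*} {l : Filter α} {a b : α → ℂ}
    (ha : Tendsto a l (𝓝 1)) (hb : Tendsto b l (𝓝 1)) :
    ∀ᶠ x in l, log (a x / b x) = log (a x) - log (b x) := by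
  have hlog : ∀ {f : α → ℂ}, Tendsto f l (𝓝 1) → Tendsto (fun x => log (f x)) l (𝓝 0) :=
    fun hf => by
      simpa [Function.comp_def] using (continuousAt_clog one_mem_slitPlane).tendsto.comp hf
  have him : Tendsto (fun x => (log (a x) - log (b x)).im) l (𝓝 0) := by
    simpa [Function.comp_def] using
      continuous_im.continuousAt.tendsto.comp ((hlog ha).sub (hlog hb))
  filter_upwards [him (Ioo_mem_nhds (neg_neg_iff_pos.mpr Real.pi_pos) Real.pi_pos),
    ha.eventually_ne one_ne_zero, hb.eventually_ne one_ne_zero] with x hx ha0 hb0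
  rw [← log_exp hx.1 hx.2.le, exp_sub, exp_log ha0, exp_log hb0]

lemma log_one_add_mul_exp_sub_one_sub_isBigO_cube (c : ℂ) :
    (fun z : ℂ => log (1 + c * (exp z - 1)) - (c * z + c * (1 - c) / 2 * z ^ 2))
      =O[𝓝 0] (· ^ 3) := by
  set u : ℂ → ℂ := fun z => 1 + c * (exp z - 1)
  have hu : Tendsto u (𝓝 0) (𝓝 1) := Continuous.tendsto' (by fun_prop) 0 1 (by simp [u])
  set F' : ℂ → ℂ := fun z => c * exp z / u z - (c + c * (1 - c) * z)
  have hF : ∀ᶠ z in 𝓝 0, HasDerivAt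
      (fun z => log (1 + c * (exp z - 1)) - (c * z + c * (1 - c) / 2 * z ^ 2)) (F' z) z := by
    filter_upwards [hu.eventually (isOpen_slitPlane.mem_nhds one_mem_slitPlane)] with z hz
    have hpoly : HasDerivAt (fun z : ℂ => c * z + c * (1 - c) / 2 * z ^ 2)
        (c + c * (1 - c) * z) z :=
      (((hasDerivAt_id' z).const_mul c).fun_add
        ((hasDerivAt_pow 2 z).const_mul (c * (1 - c) / 2))).congr_deriv (by push_cast; ring)
    exact ((((hasDerivAt_exp z).sub_const 1).const_mul c).const_add 1).clog hz |>.fun_sub hpoly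
  have hexp₁ : (fun z => exp z - 1) =O[𝓝 0] (· ^ 1) := by
    simpa using exp_sub_sum_range_isBigO_pow 1
  have hexp₂ : (fun z => exp z - 1 - z) =O[𝓝 0] (· ^ 2) := by
    simpa [Finset.sum_range_succ, sub_sub] using exp_sub_sum_range_isBigO_pow 2
  have hnum : (fun z => c * (1 - c) * ((exp z - 1 - z) - c * (z * (exp z - 1))))
      =O[𝓝 0] (· ^ 2) := by
    have hprod : (fun z => z * (exp z - 1)) =O[𝓝 0] (· ^ 2) :=
      ((isBigO_refl (fun z : ℂ => z) _).mul hexp₁).congr_right fun z => by ring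
    exact (hexp₂.sub (hprod.const_mul_left c)).const_mul_left _
  have hF' : F' =O[𝓝 0] (· ^ 2) := by
    refine (hnum.mul ((hu.inv₀ one_ne_zero).isBigO_one ℂ)).congr' ?_ (by simp)
    filter_upwards [hu.eventually_ne one_ne_zero] with z hz
    simp only [F']
    field_simp
    ring
  exact isBigO_pow_succ_of_hasDerivAt hF hF' (by simp)

theorem stmt_16_general (γ β lam : ℝ)
    (hnorm : β + γ + lam = 1) (hβ : |β| < 1) :
    (fun θ : ℝ =>
        -Complex.log ((γ + lam * Complex.exp (Complex.I * θ)) /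
            (1 - β * Complex.exp (-Complex.I * θ)))
          - (((2 * β - (1 - γ)) / (1 - β) : ℝ) * Complex.I * θ
             + ((1 - γ) * (β + γ) / (2 * (1 - β) ^ 2) : ℝ) * θ ^ 2))
      =O[nhds 0] (fun θ : ℝ => θ ^ 3) := by
  have hβ1 : (1 - β : ℂ) ≠ 0 := by exact_mod_cast (sub_pos.mpr (abs_lt.mp hβ).2).ne'
  have hlam : (lam : ℂ) = 1 - β - γ := by exact_mod_cast (by linarith : lam = 1 - β - γ)
  set c₁ : ℂ := lam / (1 - β)
  set c₂ : ℂ := -β / (1 - β)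
  have hquot : ∀ θ : ℝ, (γ + lam * exp (I * θ)) / (1 - β * exp (-I * θ))
      = (1 + c₁ * (exp (I * θ) - 1)) / (1 + c₂ * (exp (-I * θ) - 1)) := by
    intro θ
    rw [← div_div_div_cancel_right₀ hβ1]
    congr 1
    · simp only [c₁]; field_simp; rw [hlam]; ring
    · simp only [c₂]; field_simp; ring
  have hlog := eventually_log_div_eq_log_sub_log
    (a := fun θ : ℝ => 1 + c₁ * (exp (I * θ) - 1)) (b := fun θ : ℝ => 1 + c₂ * (exp (-I * θ) - 1))
    (Continuous.tendsto' (by fun_prop) 0 1 (by simp))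
    (Continuous.tendsto' (by fun_prop) 0 1 (by simp))
  refine ((isBigO_pow_comp_mul_ofReal (log_one_add_mul_exp_sub_one_sub_isBigO_cube c₂) (-I)).sub
    (isBigO_pow_comp_mul_ofReal (log_one_add_mul_exp_sub_one_sub_isBigO_cube c₁) I)).congr' ?_ .rfl
  filter_upwards [hlog] with θ hθ
  rw [hquot, hθ]
  simp only [c₁, c₂]
  push_cast
  field_simp
  rw [hlam]
  linear_combination (1 - γ) * (β + γ) * (θ : ℂ) ^ 2 * I_sq

theorem stmt_16 (γ β lam : ℝ) (hγ0 : 0 < γ) (hγ1 : γ ≤ 1)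
    (hnorm : β + γ + lam = 1) (hβ : |β| < 1) :
    (fun θ : ℝ =>
        -Complex.log ((γ + lam * Complex.exp (Complex.I * θ)) /
            (1 - β * Complex.exp (-Complex.I * θ)))
          - (((2 * β - (1 - γ)) / (1 - β) : ℝ) * Complex.I * θ
             + ((1 - γ) * (β + γ) / (2 * (1 - β) ^ 2) : ℝ) * θ ^ 2))
      =O[nhds 0] (fun θ : ℝ => θ ^ 3) :=
  stmt_16_general γ β lam hnorm hβ
end

section
/- Let η ∈ (0,1), w = 2/(2 + η(3+η)), r > 0, γ = (1 − wr)/(1 + wr), β = (1 − γ + η)/(2 + η), λ = 1 − γ − β, α = √(γ + βλ) (assume γ + βλ ≥ 0). Then α/(1 − β) = √(1 + η). -/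
/-!
Eliminating `γ` through the definition of `β` turns `γ + βλ` into the perfect square
`(1 + η)(1 - β)²`, whatever the value of `γ`; the only input from `w` and `r` is that
`γ > -1`, which makes `1 - β = (1 + γ)/(2 + η)` positive.
-/

theorem neg_one_lt_one_sub_div_one_add {x : ℝ} (hx : -1 < x) : -1 < (1 - x) / (1 + x) := by
  rw [lt_div_iff₀ (by linarith)]
  linarith

theorem add_mul_one_sub_sub_eq_mul_sq {η β γ : ℝ} (hγ : γ = 1 + η - (2 + η) * β) :
    γ + β * (1 - γ - β) = (1 + η) * (1 - β) ^ 2 := by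
  subst hγ
  ring

theorem stmt_17_general (η : ℝ) (hη : 0 < η) (r : ℝ) (hr : 0 < r)
    (w γ β lam α : ℝ)
    (hw : w = 2 / (2 + η * (3 + η)))
    (hγ : γ = (1 - w * r) / (1 + w * r))
    (hβ : β = (1 - γ + η) / (2 + η))
    (hlam : lam = 1 - γ - β)
    (hα : α = Real.sqrt (γ + β * lam)) :
    α / (1 - β) = Real.sqrt (1 + η) := by
  have hw_pos : 0 < w := by rw [hw]; positivity
  have hγ_gt : -1 < γ := hγ ▸ neg_one_lt_one_sub_div_one_add (by nlinarith [mul_pos hw_pos hr])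
  have hγβ : γ = 1 + η - (2 + η) * β := by
    rw [hβ]
    field_simp
    ring
  have hβ_lt : 0 < 1 - β := by
    have h : (2 + η) * (1 - β) = 1 + γ := by linear_combination -hγβ
    exact pos_of_mul_pos_right (h ▸ (by linarith : 0 < 1 + γ)) (by linarith)
  rw [hα, hlam, add_mul_one_sub_sub_eq_mul_sq hγβ, Real.sqrt_mul' _ (sq_nonneg _),
    Real.sqrt_sq hβ_lt.le, mul_div_cancel_right₀ _ hβ_lt.ne']

theorem stmt_17 (η : ℝ) (hη : 0 < η) (hη1 : η < 1) (r : ℝ) (hr : 0 < r)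
    (w γ β lam α : ℝ)
    (hw : w = 2 / (2 + η * (3 + η)))
    (hγ : γ = (1 - w * r) / (1 + w * r))
    (hβ : β = (1 - γ + η) / (2 + η))
    (hlam : lam = 1 - γ - β)
    (hpos : 0 ≤ γ + β * lam)
    (hα : α = Real.sqrt (γ + β * lam)) :
    α / (1 - β) = Real.sqrt (1 + η) :=
  stmt_17_general η hη r hr w γ β lam α hw hγ hβ hlam hα
end
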